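/- For every integer n ≥ 1, the function Φ(ρ) := φ₀'(ρ)/φ₀(ρ) satisfies Φ(ρ) < 1 for every ρ ∈ ℝ, and Φ(ρ) → 1 as ρ → ∞. -/

import Mathlib

/-
Writing φ₀ = ∑ b_j ρ^{2j} and differentiating termwise gives φ₀' = ρ ψ with
ψ = ∑ b_j ρ^{2j} / (n + 2j) ≥ 0, and the radial equation φ₀'' = φ₀ - (n - 1) ψ.

Hence g = φ₀ - φ₀' satisfies g + g' = (n - 1) ψ ≥ 0, so e^ρ g(ρ) is nondecreasing and
e^ρ g(ρ) ≥ g(0) = 1 for ρ ≥ 0; for ρ ≤ 0 simply φ₀' ≤ 0 < φ₀. This gives Φ < 1.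

The ratio Φ = φ₀'/φ₀ solves the Riccati equation Φ' = 1 - (n - 1) ψ/φ₀ - Φ², and
ψ/φ₀ = Φ/ρ ≤ 1/R for ρ ≥ R > 0. So e^ρ (Φ - 1 + (n - 1)/R) is nondecreasing on [R, ∞), whence
1 - Φ(ρ) ≤ e^{R - ρ} + (n - 1)/R; take R = ρ/2.
-/

open Real Filter

noncomputable def b (n : ℕ) (j : ℕ) : ℝ :=
  ∏ ℓ ∈ Finset.Icc 1 j, 1 / (2 * (ℓ : ℝ) * ((n : ℝ) + 2 * ((ℓ : ℝ) - 1)))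

noncomputable def phi0 (n : ℕ) (ρ : ℝ) : ℝ := ∑' j : ℕ, b n j * ρ ^ (2 * j)

noncomputable def evenSeries (c : ℕ → ℝ) (x : ℝ) : ℝ := ∑' j, c j * x ^ (2 * j)

def derivCoeff (c : ℕ → ℝ) (j : ℕ) : ℝ := 2 * (j + 1) * c (j + 1)

def EntireCoeffs (c : ℕ → ℝ) : Prop := ∀ r : ℝ, Summable fun j => |c j| * r ^ j

lemma two_mul_succ_mul_pow_le {a s : ℝ} (ha : 0 ≤ a) (has : a ≤ s) (hs : 1 ≤ s) {k j : ℕ}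
    (hk : k ≤ 2 * (j + 1)) : 2 * ((j : ℝ) + 1) * a ^ k ≤ (2 * s ^ 2) ^ (j + 1) := by
  have h2 : 2 * ((j : ℝ) + 1) ≤ 2 ^ (j + 1) := by
    rw [pow_succ']
    gcongr
    exact_mod_cast Nat.lt_two_pow_self
  calc 2 * ((j : ℝ) + 1) * a ^ k ≤ 2 ^ (j + 1) * s ^ (2 * (j + 1)) := by
        gcongr
        exact (pow_le_pow_left₀ ha has k).trans (pow_le_pow_right₀ hs hk)
    _ = (2 * s ^ 2) ^ (j + 1) := by rw [mul_pow, pow_mul]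

section EvenSeries

variable {c : ℕ → ℝ}

lemma summable_evenSeries (hc : EntireCoeffs c) (x : ℝ) :
    Summable fun j => c j * x ^ (2 * j) :=
  (hc (x ^ 2)).of_norm_bounded fun j => by simp [pow_mul]

lemma entireCoeffs_derivCoeff (hc : EntireCoeffs c) : EntireCoeffs (derivCoeff c) := fun r => by
  refine ((summable_nat_add_iff 1).mpr (hc (2 * (|r| + 1) ^ 2))).of_norm_bounded fun j => ?_
  have := two_mul_succ_mul_pow_le (abs_nonneg r) (le_add_of_nonneg_right zero_le_one)
    (le_add_of_nonneg_left (abs_nonneg r)) (show j ≤ 2 * (j + 1) by omega)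
  rw [derivCoeff, norm_mul, norm_pow, Real.norm_eq_abs, Real.norm_eq_abs, abs_abs, abs_mul,
    abs_of_nonneg (by positivity : (0 : ℝ) ≤ 2 * (j + 1))]
  nlinarith [abs_nonneg (c (j + 1))]

theorem hasDerivAt_evenSeries (hc : EntireCoeffs c) (x : ℝ) :
    HasDerivAt (evenSeries c) (x * evenSeries (derivCoeff c) x) x := by
  set R := |x| + 1
  have hR : 1 ≤ R := le_add_of_nonneg_left (abs_nonneg x)
  have hx : x ∈ Metric.ball (0 : ℝ) R := by simp [R]
  have hshift : ∀ y, Summable fun j => c (j + 1) * y ^ (2 * j + 2) := fun y =>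
    (summable_nat_add_iff 1).mpr (summable_evenSeries hc y)
  have htail : HasDerivAt (fun y => ∑' j, c (j + 1) * y ^ (2 * j + 2))
      (∑' j, c (j + 1) * (((2 * j + 2 : ℕ) : ℝ) * x ^ (2 * j + 2 - 1))) x := by
    refine hasDerivAt_tsum_of_isPreconnected (g := fun j y => c (j + 1) * y ^ (2 * j + 2))
      (g' := fun j y => c (j + 1) * (((2 * j + 2 : ℕ) : ℝ) * y ^ (2 * j + 2 - 1)))
      ((summable_nat_add_iff 1).mpr (hc (2 * R ^ 2)))
      Metric.isOpen_ball (convex_ball 0 R).isPreconnected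
      (fun j y _ => (hasDerivAt_pow _ y).const_mul _) (fun j y hy => ?_) hx (hshift x) hx
    have hyR : |y| ≤ R := by simpa using (mem_ball_zero_iff.mp hy).le
    have := two_mul_succ_mul_pow_le (abs_nonneg y) hyR hR (show 2 * j + 2 - 1 ≤ 2 * (j + 1) by omega)
    rw [show 2 * j + 2 - 1 = 2 * j + 1 by omega] at this ⊢
    rw [norm_mul, norm_mul, norm_pow, Real.norm_eq_abs, Real.norm_eq_abs, Real.norm_eq_abs]
    push_cast
    rw [abs_of_nonneg (by positivity : (0 : ℝ) ≤ 2 * j + 2)]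
    nlinarith [abs_nonneg (c (j + 1))]
  have hsplit : evenSeries c = fun y => c 0 + ∑' j, c (j + 1) * y ^ (2 * j + 2) := by
    funext y
    rw [evenSeries, (summable_evenSeries hc y).tsum_eq_zero_add]
    simp [mul_add]
  rw [hsplit]
  refine (htail.const_add (c 0)).congr_deriv ?_
  rw [evenSeries, ← tsum_mul_left]
  refine tsum_congr fun j => ?_
  rw [derivCoeff, show 2 * j + 2 - 1 = 2 * j + 1 by omega]
  push_cast
  ring

lemma summable_two_mul_mul_pow (hc : EntireCoeffs c) (x : ℝ) :
    Summable fun j => 2 * j * c j * x ^ (2 * j) := by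
  refine (summable_nat_add_iff 1).mp
    (((summable_evenSeries (entireCoeffs_derivCoeff hc) x).mul_left (x ^ 2)).congr fun j => ?_)
  simp only [derivCoeff]
  push_cast
  ring

lemma sq_mul_evenSeries_derivCoeff (hc : EntireCoeffs c) (x : ℝ) :
    x ^ 2 * evenSeries (derivCoeff c) x = ∑' j, 2 * j * c j * x ^ (2 * j) := by
  rw [(summable_two_mul_mul_pow hc x).tsum_eq_zero_add, evenSeries, ← tsum_mul_left]
  simp only [derivCoeff]
  push_cast
  simp only [mul_zero, zero_mul, zero_add]
  refine tsum_congr fun j => ?_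
  ring

lemma evenSeries_nonneg (hc : 0 ≤ c) (x : ℝ) : 0 ≤ evenSeries c x :=
  tsum_nonneg fun j => mul_nonneg (hc j) ((even_two_mul j).pow_nonneg x)

lemma le_evenSeries (hc : EntireCoeffs c) (hc0 : 0 ≤ c) (x : ℝ) :
    c 0 ≤ evenSeries c x := by
  simpa [evenSeries] using (summable_evenSeries hc x).le_tsum 0 fun j _ =>
    mul_nonneg (hc0 j) ((even_two_mul j).pow_nonneg x)

lemma derivCoeff_nonneg (hc : 0 ≤ c) : 0 ≤ derivCoeff c := fun j =>
  mul_nonneg (by positivity) (hc (j + 1))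

end EvenSeries

lemma monotoneOn_exp_mul {f f' : ℝ → ℝ} {s : Set ℝ} (hs : Convex ℝ s)
    (hf : ∀ t, HasDerivAt f (f' t) t) (hff' : ∀ t ∈ interior s, 0 ≤ f t + f' t) :
    MonotoneOn (fun t => exp t * f t) s := by
  have hd : ∀ t, HasDerivAt (fun t => exp t * f t) (exp t * (f t + f' t)) t := fun t =>
    ((hasDerivAt_exp t).mul (hf t)).congr_deriv (by ring)
  refine monotoneOn_of_deriv_nonneg hs (fun t _ => (hd t).continuousAt.continuousWithinAt)
    (fun t _ => (hd t).differentiableAt.differentiableWithinAt) fun t ht => ?_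
  rw [(hd t).deriv]
  exact mul_nonneg (exp_pos t).le (hff' t ht)

lemma b_zero (n : ℕ) : b n 0 = 1 := by simp [b]

lemma b_succ (n j : ℕ) : b n (j + 1) = b n j / (2 * ((j : ℝ) + 1) * (n + 2 * j)) := by
  rw [b, Finset.prod_Icc_succ_top (Nat.le_add_left 1 j), ← b]
  push_cast
  ring

lemma b_nonneg (n : ℕ) : 0 ≤ b n := fun j =>
  Finset.prod_nonneg fun ℓ hℓ => by
    have : (1 : ℝ) ≤ ℓ := by exact_mod_cast (Finset.mem_Icc.mp hℓ).1
    have : (0 : ℝ) ≤ n + 2 * (ℓ - 1) := by positivity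
    positivity

section Phi0

variable {n : ℕ}

lemma b_mul_factorial_le_one (hn : 1 ≤ n) (j : ℕ) : b n j * j.factorial ≤ 1 := by
  induction j with
  | zero => simp [b_zero]
  | succ j ih =>
    have hn' : (1 : ℝ) ≤ n := by exact_mod_cast hn
    rw [b_succ, Nat.factorial_succ, Nat.cast_mul, Nat.cast_succ]
    calc b n j / (2 * ((j : ℝ) + 1) * (n + 2 * j)) * ((j + 1) * j.factorial)
        = b n j * j.factorial / (2 * (n + 2 * j)) := by field_simp
      _ ≤ 1 := by
        rw [div_le_one (by positivity)]
        nlinarith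

lemma entireCoeffs_b (hn : 1 ≤ n) : EntireCoeffs (b n) := fun r =>
  (Real.summable_pow_div_factorial |r|).of_norm_bounded fun j => by
    rw [norm_mul, norm_pow, Real.norm_eq_abs, Real.norm_eq_abs, abs_abs,
      abs_of_nonneg (b_nonneg n j), mul_comm, le_div_iff₀ (by positivity), mul_assoc]
    exact mul_le_of_le_one_right (by positivity) (b_mul_factorial_le_one hn j)

lemma derivCoeff_b (n j : ℕ) : derivCoeff (b n) j = b n j / (n + 2 * j) := by
  rw [derivCoeff, b_succ]
  field_simp

lemma phi0_eq_add (hn : 1 ≤ n) (x : ℝ) :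
    phi0 n x = n * evenSeries (derivCoeff (b n)) x
      + x ^ 2 * evenSeries (derivCoeff (derivCoeff (b n))) x := by
  have hβ := entireCoeffs_derivCoeff (entireCoeffs_b hn)
  rw [sq_mul_evenSeries_derivCoeff hβ, evenSeries, ← tsum_mul_left,
    ← Summable.tsum_add ((summable_evenSeries hβ x).mul_left _) (summable_two_mul_mul_pow hβ x)]
  refine tsum_congr fun j => ?_
  have : (n : ℝ) + 2 * j ≠ 0 := by positivity
  rw [derivCoeff_b]
  field_simp

lemma one_le_phi0 (hn : 1 ≤ n) (x : ℝ) : 1 ≤ phi0 n x := by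
  have := le_evenSeries (entireCoeffs_b hn) (b_nonneg n) x
  rwa [b_zero] at this

lemma hasDerivAt_phi0 (hn : 1 ≤ n) (x : ℝ) :
    HasDerivAt (phi0 n) (x * evenSeries (derivCoeff (b n)) x) x :=
  hasDerivAt_evenSeries (entireCoeffs_b hn) x

lemma deriv_phi0 (hn : 1 ≤ n) : deriv (phi0 n) = fun x => x * evenSeries (derivCoeff (b n)) x :=
  funext fun x => (hasDerivAt_phi0 hn x).deriv

lemma hasDerivAt_deriv_phi0 (hn : 1 ≤ n) (x : ℝ) :
    HasDerivAt (deriv (phi0 n)) (phi0 n x - (n - 1) * evenSeries (derivCoeff (b n)) x) x := by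
  rw [deriv_phi0 hn]
  exact ((hasDerivAt_id' x).mul
    (hasDerivAt_evenSeries (entireCoeffs_derivCoeff (entireCoeffs_b hn)) x)).congr_deriv
    (by rw [phi0_eq_add hn]; ring)

lemma deriv_phi0_lt_phi0 (hn : 1 ≤ n) (x : ℝ) : deriv (phi0 n) x < phi0 n x := by
  have hn' : (1 : ℝ) ≤ n := by exact_mod_cast hn
  have hβ := evenSeries_nonneg (derivCoeff_nonneg (b_nonneg n))
  rcases le_or_gt x 0 with hx | hx
  · rw [deriv_phi0 hn]
    nlinarith [one_le_phi0 hn x, hβ x]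
  · have hmono := monotoneOn_exp_mul (f := fun t => phi0 n t - deriv (phi0 n) t) convex_univ
      (fun t => (hasDerivAt_phi0 hn t).sub (hasDerivAt_deriv_phi0 hn t)) fun t _ => by
        rw [deriv_phi0 hn]
        nlinarith [hβ t]
    have h0x := hmono (Set.mem_univ 0) (Set.mem_univ x) hx.le
    simp only [deriv_phi0 hn, exp_zero, zero_mul, sub_zero, one_mul] at h0x ⊢
    nlinarith [one_le_phi0 hn 0, exp_pos x]

noncomputable def logDerivPhi0 (n : ℕ) (x : ℝ) : ℝ := deriv (phi0 n) x / phi0 n x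

lemma logDerivPhi0_lt_one (hn : 1 ≤ n) (x : ℝ) : logDerivPhi0 n x < 1 :=
  (div_lt_one (one_pos.trans_le (one_le_phi0 hn x))).mpr (deriv_phi0_lt_phi0 hn x)

lemma hasDerivAt_logDerivPhi0 (hn : 1 ≤ n) (x : ℝ) :
    HasDerivAt (logDerivPhi0 n)
      (1 - (n - 1) * (evenSeries (derivCoeff (b n)) x / phi0 n x) - logDerivPhi0 n x ^ 2) x := by
  have hφ : phi0 n x ≠ 0 := (one_pos.trans_le (one_le_phi0 hn x)).ne'
  refine ((hasDerivAt_deriv_phi0 hn x).div (hasDerivAt_phi0 hn x) hφ).congr_deriv ?_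
  rw [logDerivPhi0, deriv_phi0 hn]
  field_simp

lemma one_sub_logDerivPhi0_le (hn : 1 ≤ n) {R x : ℝ} (hR : 0 < R) (hRx : R ≤ x) :
    1 - logDerivPhi0 n x ≤ exp (R - x) + (n - 1) / R := by
  have hn' : (0 : ℝ) ≤ n - 1 := by
    have : (1 : ℝ) ≤ n := by exact_mod_cast hn
    linarith
  have hq : ∀ t, 0 ≤ evenSeries (derivCoeff (b n)) t / phi0 n t := fun t =>
    div_nonneg (evenSeries_nonneg (derivCoeff_nonneg (b_nonneg n)) t)
      (zero_le_one.trans (one_le_phi0 hn t))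
  have hΦ : ∀ t, logDerivPhi0 n t = t * (evenSeries (derivCoeff (b n)) t / phi0 n t) := fun t => by
    rw [logDerivPhi0, deriv_phi0 hn, mul_div_assoc]
  have hmono := monotoneOn_exp_mul (f := fun t => logDerivPhi0 n t - 1 + (n - 1) / R)
    (convex_Ici R) (fun t => ((hasDerivAt_logDerivPhi0 hn t).sub_const 1).add_const _)
    fun t ht => by
      rw [interior_Ici, Set.mem_Ioi] at ht
      have hlt := logDerivPhi0_lt_one hn t
      have hqR : evenSeries (derivCoeff (b n)) t / phi0 n t ≤ 1 / R := by
        rw [le_div_iff₀ hR]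
        nlinarith [hq t, hΦ t]
      have := mul_le_mul_of_nonneg_left hqR hn'
      rw [mul_one_div] at this
      rw [hΦ] at hlt ⊢
      nlinarith [mul_nonneg (mul_nonneg (hR.le.trans ht.le) (hq t)) (sub_nonneg.mpr hlt.le)]
  have hRx' := hmono (Set.mem_Ici.mpr le_rfl) hRx hRx
  have hΦR : 0 ≤ logDerivPhi0 n R := by rw [hΦ]; exact mul_nonneg hR.le (hq R)
  have : 1 - logDerivPhi0 n x - (n - 1) / R ≤ exp R / exp x := by
    rw [le_div_iff₀ (exp_pos x)]
    nlinarith [exp_pos R, div_nonneg hn' hR.le]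
  rw [exp_sub]
  linarith

end Phi0

theorem stmt7 (n : ℕ) (hn : 1 ≤ n) :
    (∀ ρ : ℝ, deriv (phi0 n) ρ / phi0 n ρ < 1) ∧
    Tendsto (fun ρ : ℝ => deriv (phi0 n) ρ / phi0 n ρ) atTop (nhds 1) := by
  refine ⟨logDerivPhi0_lt_one hn, ?_⟩
  have hhalf : Tendsto (fun ρ : ℝ => ρ / 2) atTop atTop := tendsto_id.atTop_div_const two_pos
  have hlower : Tendsto (fun ρ : ℝ => 1 - (exp (-(ρ / 2)) + (n - 1) / (ρ / 2))) atTop (nhds 1) := by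
    simpa using ((tendsto_exp_neg_atTop_nhds_zero.comp hhalf).add
      (tendsto_const_nhds.div_atTop hhalf)).const_sub 1
  refine tendsto_of_tendsto_of_tendsto_of_le_of_le' hlower tendsto_const_nhds ?_
    (.of_forall fun ρ => (logDerivPhi0_lt_one hn ρ).le)
  filter_upwards [eventually_gt_atTop 0] with ρ hρ
  have := one_sub_logDerivPhi0_le hn (half_pos hρ) (half_le_self hρ.le)
  rw [show ρ / 2 - ρ = -(ρ / 2) by ring, logDerivPhi0] at this
  linarith
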